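/- arXiv:1708.00528 — 5 statements merged into one kernel-verified Lean document; each statement's English description precedes it below -/
import Mathlib

section
/- Let κ be a regular uncountable cardinal and let T and U be normal κ-trees. If there exists a cofinal set A ⊆ κ such that the restricted trees T↾A and U↾A are isomorphic, then T and U are club isomorphic, i.e., there is a club C ⊆ κ such that T↾C and U↾C are isomorphic. Moreover, C can be taken to be A together with its limit points, and the isomorphism on T↾C extends the given isomorphism on T↾A. -/
universe u

/-- A set-theoretic tree: a strict partial order in which the set of predecessors
of any node is well-ordered. -/
structure STree (α : Type u) where
  lt : α → α → Prop
  irrefl : ∀ x, ¬ lt x x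
  trans : ∀ {x y z}, lt x y → lt y z → lt x z
  wo : ∀ x : α, IsWellOrder {y // lt y x} (fun a b => lt a.1 b.1)

namespace STree

variable {α β : Type u}

/-- The height of a node: the order type of its set of predecessors. -/
noncomputable def ht (T : STree α) (x : α) : Ordinal :=
  @Ordinal.type {y // T.lt y x} (fun a b => T.lt a.1 b.1) (T.wo x)

/-- The reflexive closure of the tree order. -/
def le (T : STree α) (x y : α) : Prop := T.lt x y ∨ x = y

/-- `T` is a `κ`-tree: height `κ` and all levels of size `< κ`. -/
def IsKTree (T : STree α) (κ : Cardinal) : Prop :=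
  (∀ x, T.ht x < κ.ord) ∧ (∀ γ < κ.ord, ∃ x, T.ht x = γ) ∧
    ∀ γ : Ordinal, Cardinal.mk {x // T.ht x = γ} < κ

/-- `T` is a normal `κ`-tree. -/
def IsNormalTree (T : STree α) (κ : Cardinal) : Prop :=
  (∀ x, ∀ γ, T.ht x < γ → γ < κ.ord → ∃ y, T.lt x y ∧ T.ht y = γ) ∧
  (∀ x y, x ≠ y → T.ht x = T.ht y → Order.IsSuccLimit (T.ht x) →
    ∃ z, T.lt z x ∧ ¬ T.lt z y) ∧
  (∀ x, ∃ y z, T.lt x y ∧ T.lt x z ∧ ¬ T.le y z ∧ ¬ T.le z y)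

/-- A chain in `T`: a linearly ordered subset. -/
def IsChain (T : STree α) (b : Set α) : Prop :=
  ∀ x ∈ b, ∀ y ∈ b, T.le x y ∨ T.le y x

/-- `T` is countably closed: every countable chain has an upper bound. -/
def CClosed (T : STree α) : Prop :=
  ∀ b : Set α, b.Countable → T.IsChain b → ∃ z, ∀ x ∈ b, T.le x z

/-- `T` is a `κ`-Aronszajn tree: a `κ`-tree with no cofinal chain. -/
def Aronszajn (T : STree α) (κ : Cardinal) : Prop :=
  T.IsKTree κ ∧ ¬ ∃ b : Set α, T.IsChain b ∧ ∀ γ < κ.ord, ∃ x ∈ b, T.ht x = γ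

end STree

/-- `C` is club in `κo`: a subset of `κo` which is unbounded and closed. -/
def ClubIn (C : Set Ordinal) (κo : Ordinal) : Prop :=
  C ⊆ Set.Iio κo ∧ (∀ γ < κo, ∃ δ ∈ C, γ ≤ δ) ∧
    ∀ δ : Ordinal, δ < κo → δ ≠ 0 → (∀ γ < δ, ∃ b ∈ C, γ < b ∧ b < δ) → δ ∈ C

/-- The limit points (below `κo`) of a set of ordinals. -/
def limPts (A : Set Ordinal) (κo : Ordinal) : Set Ordinal :=
  {δ | δ < κo ∧ δ ≠ 0 ∧ ∀ γ < δ, ∃ b ∈ A, γ < b ∧ b < δ}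

/-!
The isomorphism `e` preserves heights: a node `a` of least height with `ht (e a) < ht a` would
have a predecessor `p` at height `ht (e a)`, and then `ht (e p) < ht (e a) = ht p`.

Call `y` compatible with `x` if it has the same height and lies above the `e`-images of all
nodes of `A`-levels below (or equal to) `x`. Every `x` has a compatible `y`: extend `x` to a
node `x'` at a level of `A` not below it (normality) and go down from `e x'` to the height of
`x`. On `A`-levels `e x` is the only compatible node, and on a level `δ` that is a limit point
of `A` there is only one as well, since distinct nodes of level `δ` already differ at a level
of `A` below `δ`. Compatibility is symmetric in `(T, e)` and `(U, e⁻¹)`, so on `A ∪ limPts A κ`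
it is the graph of a tree isomorphism extending `e`.
-/

theorem clubIn_union_limPts {A : Set Ordinal} {o : Ordinal} (hA : A ⊆ Set.Iio o)
    (hAcof : ∀ γ < o, ∃ δ ∈ A, γ ≤ δ) : ClubIn (A ∪ limPts A o) o := by
  refine ⟨Set.union_subset hA fun δ hδ => hδ.1, fun γ hγ => ?_, fun δ hδo hδ0 hcl => ?_⟩
  · obtain ⟨δ, hδ, hγδ⟩ := hAcof γ hγ
    exact ⟨δ, Or.inl hδ, hγδ⟩
  · by_cases hδA : δ ∈ A
    · exact Or.inl hδA
    refine Or.inr ⟨hδo, hδ0, fun γ hγ => ?_⟩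
    obtain ⟨b, hb | hb, hγb, hbδ⟩ := hcl γ hγ
    · exact ⟨b, hb, hγb, hbδ⟩
    · obtain ⟨a, ha, hγa, hab⟩ := hb.2.2 γ hγb
      exact ⟨a, ha, hγa, hab.trans hbδ⟩

theorem isSuccLimit_of_mem_limPts {A : Set Ordinal} {o δ : Ordinal} (h : δ ∈ limPts A o) :
    Order.IsSuccLimit δ := by
  refine Ordinal.isSuccLimit_iff.mpr ⟨h.2.1, Order.isSuccPrelimit_of_succ_lt fun γ hγ => ?_⟩
  obtain ⟨b, -, hγb, hbδ⟩ := h.2.2 γ hγ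
  exact (Order.succ_le_of_lt hγb).trans_lt hbδ

namespace STree

variable {α β : Type u}

section Basic

variable (T : STree α) {x y z : α}

theorem ht_eq_typein (h : T.lt y x) :
    T.ht y = @Ordinal.typein {z // T.lt z x} (fun a b => T.lt a.1 b.1) (T.wo x) ⟨y, h⟩ := by
  let _ := T.wo x
  let _ := T.wo y
  rw [← Ordinal.type_subrel]
  exact Ordinal.type_eq.mpr ⟨RelIso.mk
    ⟨fun z => ⟨⟨z.1, T.trans z.2 h⟩, z.2⟩, fun b => ⟨b.1.1, b.2⟩, fun _ => rfl, fun _ => rfl⟩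
    Iff.rfl⟩

theorem ht_lt_ht (h : T.lt y x) : T.ht y < T.ht x := by
  let _ := T.wo x
  rw [T.ht_eq_typein h]
  exact Ordinal.typein_lt_type _ _

theorem lt_of_ht_lt_ht (hy : T.lt y x) (hz : T.lt z x) (h : T.ht y < T.ht z) : T.lt y z := by
  let _ := T.wo x
  rw [T.ht_eq_typein hy, T.ht_eq_typein hz] at h
  exact (Ordinal.typein_lt_typein (fun a b : {w // T.lt w x} => T.lt a.1 b.1)).mp h

theorem eq_of_ht_eq (hy : T.lt y x) (hz : T.lt z x) (h : T.ht y = T.ht z) : y = z := by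
  let _ := T.wo x
  rw [T.ht_eq_typein hy, T.ht_eq_typein hz] at h
  exact congrArg Subtype.val (Ordinal.typein_injective _ h)

theorem exists_lt_ht_eq {γ : Ordinal} (h : γ < T.ht x) : ∃ y, T.lt y x ∧ T.ht y = γ := by
  let _ := T.wo x
  obtain ⟨a, ha⟩ := Ordinal.typein_surj (fun a b : {y // T.lt y x} => T.lt a.1 b.1) h
  exact ⟨a.1, a.2, (T.ht_eq_typein a.2).trans ha⟩

theorem ht_le_ht (h : T.le y x) : T.ht y ≤ T.ht x := by
  rcases h with h | rfl
  exacts [(T.ht_lt_ht h).le, le_rfl]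

protected theorem le_trans (hxy : T.le x y) (hyz : T.le y z) : T.le x z := by
  rcases hxy with hxy | rfl
  · rcases hyz with hyz | rfl
    exacts [Or.inl (T.trans hxy hyz), Or.inl hxy]
  · exact hyz

theorem lt_of_le_of_ht_lt (h : T.le y x) (hht : T.ht y < T.ht x) : T.lt y x :=
  h.resolve_right fun hyx => hht.ne (congrArg T.ht hyx)

theorem eq_of_le_of_ht_le (h : T.le y x) (hht : T.ht x ≤ T.ht y) : y = x :=
  h.resolve_left fun hyx => (T.ht_lt_ht hyx).not_ge hht

theorem le_of_ht_le_ht (hy : T.le y x) (hz : T.le z x) (h : T.ht y ≤ T.ht z) : T.le y z := by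
  rcases hz with hz | rfl
  · rcases h.lt_or_eq with h | h
    · exact Or.inl (T.lt_of_ht_lt_ht (T.lt_of_le_of_ht_lt hy (h.trans (T.ht_lt_ht hz))) hz h)
    · exact Or.inr (T.eq_of_ht_eq (T.lt_of_le_of_ht_lt hy (h ▸ T.ht_lt_ht hz)) hz h)
  · exact hy

theorem exists_le_ht_eq {γ : Ordinal} (h : γ ≤ T.ht x) : ∃ y, T.le y x ∧ T.ht y = γ := by
  rcases h.lt_or_eq with h | rfl
  · obtain ⟨y, hyx, hy⟩ := T.exists_lt_ht_eq h
    exact ⟨y, Or.inl hyx, hy⟩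
  · exact ⟨x, Or.inr rfl, rfl⟩

end Basic

namespace IsNormalTree

variable {T : STree α} {κ : Cardinal} {x y : α}

theorem exists_ge_ht_eq (hT : T.IsNormalTree κ) {γ : Ordinal} (hxγ : T.ht x ≤ γ)
    (hγ : γ < κ.ord) : ∃ y, T.le x y ∧ T.ht y = γ := by
  rcases hxγ.lt_or_eq with hxγ | rfl
  · obtain ⟨y, hxy, hy⟩ := hT.1 x γ hxγ hγ
    exact ⟨y, Or.inl hxy, hy⟩
  · exact ⟨x, Or.inr rfl, rfl⟩

theorem eq_of_forall_lt_imp_lt (hT : T.IsNormalTree κ) {A : Set Ordinal} {o : Ordinal}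
    (hx : T.ht x ∈ limPts A o) (hxy : T.ht y = T.ht x)
    (h : ∀ z, T.lt z x → T.ht z ∈ A → T.lt z y) : x = y := by
  by_contra hne
  obtain ⟨z, hzx, hzy⟩ := hT.2.1 x y hne hxy.symm (isSuccLimit_of_mem_limPts hx)
  obtain ⟨b, hbA, hzb, hbx⟩ := hx.2.2 _ (T.ht_lt_ht hzx)
  obtain ⟨q, hqx, rfl⟩ := T.exists_lt_ht_eq hbx
  exact hzy (T.trans (T.lt_of_ht_lt_ht hzx hqx hzb) (h q hqx hbA))

end IsNormalTree

section Extension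

variable {T : STree α} {U : STree β} {A : Set Ordinal}
  {e : {x : α // T.ht x ∈ A} ≃ {y : β // U.ht y ∈ A}} {x x' : α} {y y' : β}

theorem lt_iff_lt_symm (he : ∀ a b, T.lt a.1 b.1 ↔ U.lt (e a).1 (e b).1)
    (a b : {y : β // U.ht y ∈ A}) : U.lt a.1 b.1 ↔ T.lt (e.symm a).1 (e.symm b).1 := by
  simpa using (he (e.symm a) (e.symm b)).symm

theorem le_apply_of_le (he : ∀ a b, T.lt a.1 b.1 ↔ U.lt (e a).1 (e b).1)
    {a b : {x : α // T.ht x ∈ A}} (h : T.le a.1 b.1) : U.le (e a).1 (e b).1 :=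
  h.imp (he a b).1 fun hab => by rw [Subtype.ext hab]

theorem ht_le_ht_apply (he : ∀ a b, T.lt a.1 b.1 ↔ U.lt (e a).1 (e b).1)
    (a : {x : α // T.ht x ∈ A}) : T.ht a.1 ≤ U.ht (e a).1 := by
  induction ho : T.ht a.1 using WellFoundedLT.induction generalizing a with
  | _ o ih =>
    subst ho
    by_contra! hlt
    obtain ⟨p, hpa, hp⟩ := T.exists_lt_ht_eq hlt
    let b : {x : α // T.ht x ∈ A} := ⟨p, hp ▸ (e a).2⟩
    have hb : T.ht p ≤ U.ht (e b).1 := ih _ (T.ht_lt_ht hpa) b rfl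
    exact (hb.trans_lt (U.ht_lt_ht ((he b a).1 hpa))).ne hp

theorem ht_apply (he : ∀ a b, T.lt a.1 b.1 ↔ U.lt (e a).1 (e b).1)
    (a : {x : α // T.ht x ∈ A}) : U.ht (e a).1 = T.ht a.1 :=
  le_antisymm (by simpa using ht_le_ht_apply (lt_iff_lt_symm he) (e a)) (ht_le_ht_apply he a)

def Compatible (e : {x : α // T.ht x ∈ A} ≃ {y : β // U.ht y ∈ A}) (x : α) (y : β) : Prop :=
  U.ht y = T.ht x ∧ ∀ a : {x : α // T.ht x ∈ A}, T.le a.1 x → U.le (e a).1 y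

theorem compatible_apply (he : ∀ a b, T.lt a.1 b.1 ↔ U.lt (e a).1 (e b).1)
    (a : {x : α // T.ht x ∈ A}) : Compatible e a.1 (e a).1 :=
  ⟨ht_apply he a, fun _ hb => le_apply_of_le he hb⟩

theorem Compatible.of_le (he : ∀ a b, T.lt a.1 b.1 ↔ U.lt (e a).1 (e b).1)
    (h : Compatible e x y) (hx : T.le x' x) (hy : U.le y' y) (hht : U.ht y' = T.ht x') :
    Compatible e x' y' :=
  ⟨hht, fun a ha => U.le_of_ht_le_ht (h.2 a (T.le_trans ha hx)) hy
    (by rw [ht_apply he, hht]; exact T.ht_le_ht ha)⟩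

theorem Compatible.symm (he : ∀ a b, T.lt a.1 b.1 ↔ U.lt (e a).1 (e b).1)
    (h : Compatible e x y) : Compatible e.symm y x := by
  refine ⟨h.1.symm, fun b hb => ?_⟩
  obtain ⟨p, hpx, hp⟩ := T.exists_le_ht_eq (h.1 ▸ U.ht_le_ht hb : U.ht b.1 ≤ T.ht x)
  let a : {x : α // T.ht x ∈ A} := ⟨p, hp ▸ b.2⟩
  have hab : e a = b := by
    have hht : U.ht (e a).1 = U.ht b.1 := (ht_apply he a).trans hp
    exact Subtype.ext (U.eq_of_le_of_ht_le (U.le_of_ht_le_ht (h.2 a hpx) hb hht.le) hht.ge)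
  rw [← hab, e.symm_apply_apply]
  exact hpx

theorem Compatible.eq_apply (he : ∀ a b, T.lt a.1 b.1 ↔ U.lt (e a).1 (e b).1)
    (h : Compatible e x y) (hx : T.ht x ∈ A) : y = (e ⟨x, hx⟩).1 :=
  (U.eq_of_le_of_ht_le (h.2 ⟨x, hx⟩ (Or.inr rfl)) (by rw [h.1, ht_apply he])).symm

theorem Compatible.unique {κ : Cardinal} {o : Ordinal} (hUn : U.IsNormalTree κ)
    (he : ∀ a b, T.lt a.1 b.1 ↔ U.lt (e a).1 (e b).1) (hx : T.ht x ∈ A ∪ limPts A o)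
    (h : Compatible e x y) (h' : Compatible e x y') : y = y' := by
  rcases hx with hx | hx
  · rw [h.eq_apply he hx, h'.eq_apply he hx]
  refine hUn.eq_of_forall_lt_imp_lt (h.1 ▸ hx) (h'.1.trans h.1.symm) fun q hq hqA => ?_
  let b : {y : β // U.ht y ∈ A} := ⟨q, hqA⟩
  have hqy' : U.le q y' := by
    simpa [b] using h'.2 (e.symm b) ((h.symm he).2 b (Or.inl hq))
  exact U.lt_of_le_of_ht_lt hqy' (by rw [h'.1, ← h.1]; exact U.ht_lt_ht hq)

theorem exists_compatible {κ : Cardinal} (hTn : T.IsNormalTree κ) (hA : A ⊆ Set.Iio κ.ord)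
    (hAcof : ∀ γ < κ.ord, ∃ δ ∈ A, γ ≤ δ) (he : ∀ a b, T.lt a.1 b.1 ↔ U.lt (e a).1 (e b).1)
    (hx : T.ht x < κ.ord) : ∃ y, Compatible e x y := by
  obtain ⟨γ, hγA, hxγ⟩ := hAcof _ hx
  obtain ⟨x', hxx', hx'⟩ := hTn.exists_ge_ht_eq hxγ (hA hγA)
  let a : {x : α // T.ht x ∈ A} := ⟨x', hx' ▸ hγA⟩
  obtain ⟨y, hy, hyx⟩ := U.exists_le_ht_eq (show T.ht x ≤ U.ht (e a).1 by
    rw [ht_apply he]; exact hx' ▸ hxγ)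
  exact ⟨y, (compatible_apply he a).of_le he hxx' hy hyx⟩

theorem Compatible.lt_of_lt {κ : Cardinal} {o : Ordinal} (hUn : U.IsNormalTree κ)
    (he : ∀ a b, T.lt a.1 b.1 ↔ U.lt (e a).1 (e b).1) (hx : T.ht x ∈ A ∪ limPts A o)
    (h : Compatible e x y) (h' : Compatible e x' y') (hxx' : T.lt x x') : U.lt y y' := by
  obtain ⟨w, hwy', hw⟩ := U.exists_le_ht_eq (h'.1 ▸ (T.ht_lt_ht hxx').le : T.ht x ≤ U.ht y')
  obtain rfl := h.unique hUn he hx (h'.of_le he (Or.inl hxx') hwy' hw)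
  exact U.lt_of_le_of_ht_lt hwy' (by rw [hw, h'.1]; exact T.ht_lt_ht hxx')

theorem exists_equiv_compatible {κ : Cardinal} (hTn : T.IsNormalTree κ)
    (hUn : U.IsNormalTree κ) (hA : A ⊆ Set.Iio κ.ord) (hAcof : ∀ γ < κ.ord, ∃ δ ∈ A, γ ≤ δ)
    (he : ∀ a b, T.lt a.1 b.1 ↔ U.lt (e a).1 (e b).1) :
    ∃ g : {x : α // T.ht x ∈ A ∪ limPts A κ.ord} ≃ {y : β // U.ht y ∈ A ∪ limPts A κ.ord},
      ∀ x, Compatible e x.1 (g x).1 := by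
  have hC : ∀ {δ}, δ ∈ A ∪ limPts A κ.ord → δ < κ.ord := fun hδ => hδ.elim (hA ·) (·.1)
  choose g hg using fun x : {x : α // T.ht x ∈ A ∪ limPts A κ.ord} =>
    exists_compatible hTn hA hAcof he (hC x.2)
  have hgC : ∀ x, U.ht (g x) ∈ A ∪ limPts A κ.ord := fun x => (hg x).1 ▸ x.2
  have hbij : Function.Bijective
      fun x => (⟨g x, hgC x⟩ : {y : β // U.ht y ∈ A ∪ limPts A κ.ord}) := by
    refine ⟨fun x x' hxx' => Subtype.ext ?_, fun y => ?_⟩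
    · have hx' : Compatible e.symm (g x) x'.1 := by
        rw [show g x = g x' from congrArg Subtype.val hxx']
        exact (hg x').symm he
      exact ((hg x).symm he).unique hTn (lt_iff_lt_symm he) (hgC x) hx'
    · obtain ⟨x, hx⟩ := exists_compatible hUn hA hAcof (lt_iff_lt_symm he) (hC y.2)
      have hxy : Compatible e x y.1 := by simpa using hx.symm (lt_iff_lt_symm he)
      have hxC : T.ht x ∈ A ∪ limPts A κ.ord := hxy.1 ▸ y.2
      exact ⟨⟨x, hxC⟩, Subtype.ext ((hg _).unique hUn he hxC hxy)⟩
  exact ⟨Equiv.ofBijective _ hbij, hg⟩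

end Extension

end STree

theorem statement_1_general {α β : Type u} (κ : Cardinal)
    (T : STree α) (U : STree β)
    (hTn : T.IsNormalTree κ) (hUn : U.IsNormalTree κ)
    (A : Set Ordinal) (hA : A ⊆ Set.Iio κ.ord)
    (hAcof : ∀ γ < κ.ord, ∃ δ ∈ A, γ ≤ δ)
    (e : {x : α // T.ht x ∈ A} ≃ {y : β // U.ht y ∈ A})
    (he : ∀ a b, T.lt a.1 b.1 ↔ U.lt (e a).1 (e b).1) :
    ClubIn (A ∪ limPts A κ.ord) κ.ord ∧
    ∃ g : {x : α // T.ht x ∈ A ∪ limPts A κ.ord} ≃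
          {y : β // U.ht y ∈ A ∪ limPts A κ.ord},
      (∀ a b, T.lt a.1 b.1 ↔ U.lt (g a).1 (g b).1) ∧
      ∀ (x : α) (hx : T.ht x ∈ A),
        (g ⟨x, Set.mem_union_left _ hx⟩).1 = (e ⟨x, hx⟩).1 := by
  obtain ⟨g, hg⟩ := STree.exists_equiv_compatible hTn hUn hA hAcof he
  refine ⟨clubIn_union_limPts hA hAcof, g, fun a b => ⟨(hg a).lt_of_lt hUn he a.2 (hg b), ?_⟩,
    fun x hx => (hg _).eq_apply he hx⟩
  intro hab
  exact ((hg a).symm he).lt_of_lt hTn (STree.lt_iff_lt_symm he) (g a).2 ((hg b).symm he) hab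

theorem statement_1 {α β : Type u} (κ : Cardinal) (hreg : κ.IsRegular)
    (hunc : Cardinal.aleph0 < κ)
    (T : STree α) (U : STree β)
    (hT : T.IsKTree κ) (hU : U.IsKTree κ)
    (hTn : T.IsNormalTree κ) (hUn : U.IsNormalTree κ)
    (A : Set Ordinal) (hA : A ⊆ Set.Iio κ.ord)
    (hAcof : ∀ γ < κ.ord, ∃ δ ∈ A, γ ≤ δ)
    (e : {x : α // T.ht x ∈ A} ≃ {y : β // U.ht y ∈ A})
    (he : ∀ a b, T.lt a.1 b.1 ↔ U.lt (e a).1 (e b).1) :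
    ClubIn (A ∪ limPts A κ.ord) κ.ord ∧
    ∃ g : {x : α // T.ht x ∈ A ∪ limPts A κ.ord} ≃
          {y : β // U.ht y ∈ A ∪ limPts A κ.ord},
      (∀ a b, T.lt a.1 b.1 ↔ U.lt (g a).1 (g b).1) ∧
      ∀ (x : α) (hx : T.ht x ∈ A),
        (g ⟨x, Set.mem_union_left _ hx⟩).1 = (e ⟨x, hx⟩).1 :=
  statement_1_general κ T U hTn hUn A hA hAcof e he
end

section
/- Let P be a forcing poset and N any set. A condition p ∈ P is strongly (N,P)-generic if and only if for every q ≤ p there exists s ∈ N ∩ P such that every t ≤ s with t ∈ N ∩ P is compatible with q in P. -/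
universe u

section
variable {P : Type u} [Preorder P]

/-- Two conditions are compatible if they have a common lower bound. -/
def Compat (p q : P) : Prop := ∃ r, r ≤ p ∧ r ≤ q

/-- `D` is a dense subset of the suborder `N ∩ P`. -/
def DenseInSub (N D : Set P) : Prop := D ⊆ N ∧ ∀ s ∈ N, ∃ t ∈ D, t ≤ s

/-- `D` is predense below `p`. -/
def PredenseBelow (D : Set P) (p : P) : Prop := ∀ r, r ≤ p → ∃ d ∈ D, Compat r d

/-- `p` is strongly `(N, P)`-generic. -/
def StronglyGeneric (N : Set P) (p : P) : Prop :=
  ∀ D : Set P, DenseInSub N D → PredenseBelow D p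

/-- `*_N(q, s)`: `s ∈ N ∩ P` and every extension of `s` in `N ∩ P` is compatible with `q`. -/
def NStar (N : Set P) (q s : P) : Prop := s ∈ N ∧ ∀ t ∈ N, t ≤ s → Compat q t

end

section

variable {P : Type u} [Preorder P] {N : Set P} {p q : P}

theorem denseInSub_not_compat_of_forall_not_nStar (h : ∀ s, ¬NStar N q s) :
    DenseInSub N {s | s ∈ N ∧ ¬Compat q s} := by
  refine ⟨fun s hs => hs.1, fun s hs => ?_⟩
  have : ¬∀ t ∈ N, t ≤ s → Compat q t := fun hall => h s ⟨hs, hall⟩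
  push Not at this
  obtain ⟨t, htN, hts, hincompat⟩ := this
  exact ⟨t, ⟨htN, hincompat⟩, hts⟩

theorem StronglyGeneric.exists_nStar (hp : StronglyGeneric N p) (hq : q ≤ p) :
    ∃ s, NStar N q s := by
  by_contra! h
  obtain ⟨d, ⟨-, hincompat⟩, hcompat⟩ :=
    hp _ (denseInSub_not_compat_of_forall_not_nStar h) q hq
  exact hincompat hcompat

theorem StronglyGeneric.of_forall_exists_nStar (h : ∀ q, q ≤ p → ∃ s, NStar N q s) :
    StronglyGeneric N p := by
  intro D hD r hr
  obtain ⟨s, hsN, hs⟩ := h r hr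
  obtain ⟨t, htD, hts⟩ := hD.2 s hsN
  exact ⟨t, htD, hs t (hD.1 htD) hts⟩

end

theorem statement_5_general {P : Type u} [Preorder P]
    (N : Set P) (p : P) :
    StronglyGeneric N p ↔ ∀ q, q ≤ p → ∃ s, NStar N q s :=
  ⟨fun hp _ hq => hp.exists_nStar hq, StronglyGeneric.of_forall_exists_nStar⟩

theorem statement_5 {P : Type u} [Preorder P] [OrderTop P]
    (N : Set P) (p : P) :
    StronglyGeneric N p ↔ ∀ q, q ≤ p → ∃ s, NStar N q s :=
  statement_5_general N p
end

section
/- Let κ be an ineffable cardinal. Then the ineffability ideal on κ — the collection of S ⊆ κ such that for some sequence ⟨A_α : α < κ⟩ with A_α ⊆ α, S contains no stationary subset coherent for the sequence — is a proper ideal on κ containing all nonstationary sets. -/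
universe u

/-- `S` is stationary in `κo`: it meets every club subset of `κo`. -/
def StationaryIn (S : Set Ordinal) (κo : Ordinal) : Prop :=
  ∀ C : Set Ordinal, ClubIn C κo → (S ∩ C).Nonempty

/-- `S` is coherent for the sequence `A`. -/
def Coherent (A : Ordinal → Set Ordinal) (S : Set Ordinal) : Prop :=
  ∀ a ∈ S, ∀ b ∈ S, a < b → A a = A b ∩ Set.Iio a

/-- `κ` is ineffable. -/
def Ineffable (κ : Cardinal) : Prop :=
  ∀ A : Ordinal → Set Ordinal, (∀ a, A a ⊆ Set.Iio a) →
    ∃ B : Set Ordinal, StationaryIn {a | a < κ.ord ∧ B ∩ Set.Iio a = A a} κ.ord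

/-- The ineffability ideal on `κ`. -/
def IneffIdeal (κ : Cardinal) : Set (Set Ordinal) :=
  {S | S ⊆ Set.Iio κ.ord ∧ ∃ A : Ordinal → Set Ordinal, (∀ a, A a ⊆ Set.Iio a) ∧
    ¬ ∃ T : Set Ordinal, T ⊆ S ∧ StationaryIn T κ.ord ∧ Coherent A T}

/-!
For a union `S₁ ∪ S₂`, splice the two witnessing sequences along `S₁`: a stationary coherent
subset of the union splits into its parts in `S₁` and outside `S₁`, one of which is stationary
because `cof κ ≠ ω` makes the club filter closed under finite intersections (transported from
Mathlib's `IsClub` on the well-order `Iio κ.ord`), and that part is coherent for one of the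
original sequences. Ineffability makes `κ` itself positive: the stationary set where
`B ∩ α = A_α` is coherent for `A`.
-/

open Set Order Cardinal

section Club

variable {κo : Ordinal.{u}}

lemma ClubIn.isClub_preimage {C : Set Ordinal.{u}} (hC : ClubIn C κo) :
    IsClub (Subtype.val ⁻¹' C : Set (Iio κo)) := by
  refine ⟨?_, fun a => ?_⟩
  · rw [dirSupClosed_iff_of_linearOrder]
    intro d hdC ⟨x, hx⟩ a ha
    by_cases had : a ∈ d
    · exact hdC had
    have hlt : ∀ y ∈ d, y < a := fun y hy => (ha.1 hy).lt_of_ne (ne_of_mem_of_not_mem hy had)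
    refine hC.2.2 a.1 a.2 (zero_le.trans_lt (show x.1 < a.1 from hlt x hx)).ne' ?_
    intro γ hγ
    obtain ⟨y, hy, hγy⟩ := (lt_isLUB_iff ha).1 (show (⟨γ, hγ.trans a.2⟩ : Iio κo) < a from hγ)
    exact ⟨y, hdC hy, hγy, hlt y hy⟩
  · obtain ⟨δ, hδC, haδ⟩ := hC.2.1 a a.2
    exact ⟨⟨δ, hC.1 hδC⟩, hδC, haδ⟩

lemma IsClub.clubIn_image {t : Set (Iio κo)} (ht : IsClub t) :
    ClubIn (Subtype.val '' t) κo := by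
  refine ⟨image_subset_iff.2 fun x _ => x.2, fun γ hγ => ?_, fun δ hδ hδ0 hlim => ?_⟩
  · obtain ⟨b, hb, hγb⟩ := ht.isCofinal ⟨γ, hγ⟩
    exact ⟨b, mem_image_of_mem _ hb, hγb⟩
  · obtain ⟨b, ⟨x, hx, rfl⟩, -, hxδ⟩ := hlim 0 (pos_iff_ne_zero.2 hδ0)
    have hlub : IsLUB {y ∈ t | y.1 < δ} ⟨δ, hδ⟩ := by
      refine ⟨fun y hy => hy.2.le, fun u hu => not_lt.1 fun huδ => ?_⟩
      obtain ⟨_, ⟨y, hy, rfl⟩, huy, hyδ⟩ := hlim u huδ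
      exact (hu ⟨hy, hyδ⟩).not_gt huy
    exact ⟨⟨δ, hδ⟩, ht.isLUB_mem (sep_subset _ _) ⟨x, hx, hxδ⟩ hlub, rfl⟩

lemma stationaryIn_iff_isStationary {S : Set Ordinal.{u}} :
    StationaryIn S κo ↔ IsStationary (Subtype.val ⁻¹' S : Set (Iio κo)) := by
  refine ⟨fun hS t ht => ?_, fun hS C hC => ?_⟩
  · obtain ⟨_, hxS, x, hx, rfl⟩ := hS _ ht.clubIn_image
    exact ⟨x, hxS, hx⟩
  · obtain ⟨x, hxS, hxC⟩ := hS hC.isClub_preimage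
    exact ⟨x, hxS, hxC⟩

lemma stationaryIn_union_iff (hκo : κo.cof ≠ ℵ₀) {S T : Set Ordinal.{u}} :
    StationaryIn (S ∪ T) κo ↔ StationaryIn S κo ∨ StationaryIn T κo := by
  have hcof : Order.cof (Iio κo) ≠ ℵ₀ := by
    rwa [Ordinal.cof_Iio, ← Ordinal.lift_cof, Ne, lift_eq_aleph0]
  simp only [stationaryIn_iff_isStationary, preimage_union, isStationary_union_iff hcof]

end Club

section Coherent

variable {A A' : Ordinal → Set Ordinal} {S T : Set Ordinal}

lemma Coherent.mono (hT : Coherent A T) (hST : S ⊆ T) : Coherent A S :=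
  fun a ha b hb => hT a (hST ha) b (hST hb)

lemma Coherent.congr (hS : Coherent A S) (hAA' : EqOn A A' S) : Coherent A' S := by
  intro a ha b hb hab
  rw [← hAA' ha, ← hAA' hb]
  exact hS a ha b hb hab

lemma coherent_setOf_inter_Iio_eq (B : Set Ordinal) : Coherent A {a | B ∩ Iio a = A a} := by
  intro a (ha : B ∩ Iio a = A a) b (hb : B ∩ Iio b = A b) hab
  rw [← ha, ← hb, inter_assoc, Iio_inter_Iio, min_eq_right hab.le]

end Coherent

section IneffIdeal

variable {κ : Cardinal.{u}} {S T : Set Ordinal.{u}}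

lemma mem_ineffIdeal_of_subset (hS : S ∈ IneffIdeal κ) (hTS : T ⊆ S) : T ∈ IneffIdeal κ := by
  obtain ⟨hSκ, A, hA, hno⟩ := hS
  exact ⟨hTS.trans hSκ, A, hA, fun ⟨U, hUT, hU⟩ => hno ⟨U, hUT.trans hTS, hU⟩⟩

lemma mem_ineffIdeal_of_not_stationaryIn (hSκ : S ⊆ Iio κ.ord) (hS : ¬ StationaryIn S κ.ord) :
    S ∈ IneffIdeal κ :=
  ⟨hSκ, fun _ => ∅, fun _ => empty_subset _, fun ⟨_, hTS, hT, _⟩ =>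
    hS fun C hC => (hT C hC).mono (inter_subset_inter_left C hTS)⟩

lemma union_mem_ineffIdeal (hκ : κ.ord.cof ≠ ℵ₀) (hS : S ∈ IneffIdeal κ)
    (hT : T ∈ IneffIdeal κ) : S ∪ T ∈ IneffIdeal κ := by
  classical
  obtain ⟨hSκ, A₁, hA₁, hno₁⟩ := hS
  obtain ⟨hTκ, A₂, hA₂, hno₂⟩ := hT
  refine ⟨union_subset hSκ hTκ, S.piecewise A₁ A₂, fun a => ?_, ?_⟩
  · by_cases ha : a ∈ S
    · simpa [ha] using hA₁ a
    · simpa [ha] using hA₂ a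
  rintro ⟨U, hU, hUstat, hUcoh⟩
  rw [← inter_union_sdiff U S, stationaryIn_union_iff hκ] at hUstat
  rcases hUstat with hstat | hstat
  · exact hno₁ ⟨U ∩ S, inter_subset_right, hstat,
      (hUcoh.mono inter_subset_left).congr ((piecewise_eqOn S A₁ A₂).mono inter_subset_right)⟩
  · refine hno₂ ⟨U \ S, fun a ha => (hU ha.1).resolve_left ha.2, hstat,
      (hUcoh.mono sdiff_subset).congr ?_⟩
    exact (piecewise_eqOn_compl S A₁ A₂).mono fun a ha => ha.2

lemma Iio_ord_notMem_ineffIdeal (hκ : Ineffable κ) : Iio κ.ord ∉ IneffIdeal κ := by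
  rintro ⟨-, A, hA, hno⟩
  obtain ⟨B, hB⟩ := hκ A hA
  exact hno ⟨_, fun a ha => ha.1, hB,
    (coherent_setOf_inter_Iio_eq B).mono fun a ha => ha.2⟩

end IneffIdeal

theorem statement_11 (κ : Cardinal) (hreg : κ.IsRegular)
    (hunc : Cardinal.aleph0 < κ) (hineff : Ineffable κ) :
    (∅ ∈ IneffIdeal κ) ∧
    (∀ A ∈ IneffIdeal κ, ∀ B : Set Ordinal, B ⊆ A → B ∈ IneffIdeal κ) ∧
    (∀ A ∈ IneffIdeal κ, ∀ B ∈ IneffIdeal κ, A ∪ B ∈ IneffIdeal κ) ∧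
    (Set.Iio κ.ord ∉ IneffIdeal κ) ∧
    (∀ S : Set Ordinal, S ⊆ Set.Iio κ.ord → ¬ StationaryIn S κ.ord →
      S ∈ IneffIdeal κ) := by
  have hcof : κ.ord.cof ≠ ℵ₀ := by rw [hreg.cof_ord]; exact hunc.ne'
  have hempty : ¬ StationaryIn ∅ κ.ord := by
    simp [stationaryIn_iff_isStationary]
  exact ⟨mem_ineffIdeal_of_not_stationaryIn (empty_subset _) hempty,
    fun _ hA _ hBA => mem_ineffIdeal_of_subset hA hBA,
    fun _ hA _ hB => union_mem_ineffIdeal hcof hA hB,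
    Iio_ord_notMem_ineffIdeal hineff,
    fun _ => mem_ineffIdeal_of_not_stationaryIn⟩
end

section
/- Assume CH, and let T and U be normal countably closed ω₂-Aronszajn trees all of whose levels have size ω₁. Then the forcing poset P(T,U) is countably closed: every descending ω-sequence of conditions ⟨p_n⟩ has a greatest lower bound, namely (⋃_n A_{p_n}, ⋃_n f_{p_n}). -/
universe u

/-- The continuum hypothesis. -/
def CH : Prop := (2 : Cardinal.{0}) ^ Cardinal.aleph0 = Cardinal.aleph 1

/-- A pair `(A, F)` as in the forcing `ℙ(T,U)`: a set of ordinals together with the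
graph of a partial function from `T` to `U`. -/
structure PPair (α β : Type u) where
  A : Set Ordinal.{u}
  F : Set (α × β)

/-- Ordinals below `ω₂` of cofinality `ω₁`. -/
def cofW1 : Set Ordinal :=
  {γ | γ < (Cardinal.aleph 2).ord ∧ Ordinal.cof γ = Cardinal.aleph 1}

/-- The domain of a graph. -/
def dom' {α β : Type u} (F : Set (α × β)) : Set α := {x | ∃ y, (x, y) ∈ F}

/-- `p = (A, F)` is a condition in the forcing poset `ℙ(T,U)`. -/
def IsCond {α β : Type u} (T : STree α) (U : STree β) (p : PPair α β) : Prop :=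
  p.A.Countable ∧ p.A ⊆ cofW1 ∧
  (∀ q ∈ p.F, ∀ r ∈ p.F, q.1 = r.1 → q.2 = r.2) ∧
  (∀ q ∈ p.F, ∀ r ∈ p.F, q.2 = r.2 → q.1 = r.1) ∧
  (dom' p.F).Countable ∧
  (∀ q ∈ p.F, T.ht q.1 ∈ p.A) ∧
  (∀ q ∈ p.F, ∀ z : α, T.lt z q.1 → T.ht z ∈ p.A → z ∈ dom' p.F) ∧
  (∀ q ∈ p.F, ∀ b ∈ p.A, T.ht q.1 < b → ∃ r ∈ p.F, T.ht r.1 = b ∧ T.lt q.1 r.1) ∧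
  (∀ q ∈ p.F, U.ht q.2 = T.ht q.1) ∧
  (∀ q ∈ p.F, ∀ r ∈ p.F, T.lt q.1 r.1 → U.lt q.2 r.2)

/-- The order on `ℙ(T,U)`: `p ≤ q` iff `p` extends `q` in both coordinates. -/
def CondLe {α β : Type u} (p q : PPair α β) : Prop := q.A ⊆ p.A ∧ q.F ⊆ p.F

/-- A normal countably closed `ω₂`-Aronszajn tree all of whose levels have size `ω₁`. -/
def NiceTree {α : Type u} (T : STree α) : Prop :=
  T.IsKTree (Cardinal.aleph 2) ∧ T.IsNormalTree (Cardinal.aleph 2) ∧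
    T.CClosed ∧ T.Aronszajn (Cardinal.aleph 2) ∧
    ∀ γ < (Cardinal.aleph 2).ord, Cardinal.mk {x // T.ht x = γ} = Cardinal.aleph 1

/-! Every clause of `IsCond` speaks about at most two members of `F` and `A`, so it passes
from the members of a directed family of conditions to their union: any two of its members
already lie in a single condition of the family. -/

theorem dom'_iUnion {ι : Sort*} {α β : Type u} (F : ι → Set (α × β)) :
    dom' (⋃ i, F i) = ⋃ i, dom' (F i) := by
  ext x
  simp only [dom', Set.mem_iUnion, Set.mem_ofPred_eq]
  exact exists_comm

namespace PPair

variable {ι : Type*} {α β : Type u}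

def iUnion (p : ι → PPair α β) : PPair α β := ⟨⋃ i, (p i).A, ⋃ i, (p i).F⟩

variable {p : ι → PPair α β}

theorem condLe_iUnion (i : ι) : CondLe (iUnion p) (p i) :=
  ⟨Set.subset_iUnion (fun i => (p i).A) i, Set.subset_iUnion (fun i => (p i).F) i⟩

theorem iUnion_condLe {q : PPair α β} (hq : ∀ i, CondLe q (p i)) : CondLe q (iUnion p) :=
  ⟨Set.iUnion_subset fun i => (hq i).1, Set.iUnion_subset fun i => (hq i).2⟩

theorem exists_mem_F_mem_F (hdir : Directed (fun a b => CondLe b a) p) {q r : α × β}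
    (hq : q ∈ (iUnion p).F) (hr : r ∈ (iUnion p).F) :
    ∃ k, q ∈ (p k).F ∧ r ∈ (p k).F := by
  obtain ⟨i, hi⟩ := Set.mem_iUnion.1 hq
  obtain ⟨j, hj⟩ := Set.mem_iUnion.1 hr
  obtain ⟨k, hik, hjk⟩ := hdir i j
  exact ⟨k, hik.2 hi, hjk.2 hj⟩

theorem exists_mem_F_mem_A (hdir : Directed (fun a b => CondLe b a) p) {q : α × β}
    {b : Ordinal} (hq : q ∈ (iUnion p).F) (hb : b ∈ (iUnion p).A) :
    ∃ k, q ∈ (p k).F ∧ b ∈ (p k).A := by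
  obtain ⟨i, hi⟩ := Set.mem_iUnion.1 hq
  obtain ⟨j, hj⟩ := Set.mem_iUnion.1 hb
  obtain ⟨k, hik, hjk⟩ := hdir i j
  exact ⟨k, hik.2 hi, hjk.1 hj⟩

theorem isCond_iUnion [Countable ι] {T : STree α} {U : STree β}
    (hdir : Directed (fun a b => CondLe b a) p) (hcond : ∀ i, IsCond T U (p i)) :
    IsCond T U (iUnion p) := by
  have mem_F {q : α × β} {k : ι} (h : q ∈ (p k).F) : q ∈ (iUnion p).F :=
    Set.mem_iUnion.2 ⟨k, h⟩
  refine ⟨Set.countable_iUnion fun i => (hcond i).1, Set.iUnion_subset fun i => (hcond i).2.1,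
    ?functional, ?inj, ?dom, ?ht, ?closed, ?ext, ?htU, ?mono⟩
  case functional =>
    intro q hq r hr
    obtain ⟨k, hqk, hrk⟩ := exists_mem_F_mem_F hdir hq hr
    exact (hcond k).2.2.1 q hqk r hrk
  case inj =>
    intro q hq r hr
    obtain ⟨k, hqk, hrk⟩ := exists_mem_F_mem_F hdir hq hr
    exact (hcond k).2.2.2.1 q hqk r hrk
  case dom =>
    rw [iUnion, dom'_iUnion]
    exact Set.countable_iUnion fun i => (hcond i).2.2.2.2.1
  case ht =>
    intro q hq
    obtain ⟨k, hk⟩ := Set.mem_iUnion.1 hq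
    exact Set.mem_iUnion.2 ⟨k, (hcond k).2.2.2.2.2.1 q hk⟩
  case closed =>
    intro q hq z hz hzA
    obtain ⟨k, hqk, hzk⟩ := exists_mem_F_mem_A hdir hq hzA
    obtain ⟨y, hy⟩ := (hcond k).2.2.2.2.2.2.1 q hqk z hz hzk
    exact ⟨y, mem_F hy⟩
  case ext =>
    intro q hq b hb hlt
    obtain ⟨k, hqk, hbk⟩ := exists_mem_F_mem_A hdir hq hb
    obtain ⟨r, hr, hrb, hqr⟩ := (hcond k).2.2.2.2.2.2.2.1 q hqk b hbk hlt
    exact ⟨r, mem_F hr, hrb, hqr⟩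
  case htU =>
    intro q hq
    obtain ⟨k, hk⟩ := Set.mem_iUnion.1 hq
    exact (hcond k).2.2.2.2.2.2.2.2.1 q hk
  case mono =>
    intro q hq r hr
    obtain ⟨k, hqk, hrk⟩ := exists_mem_F_mem_F hdir hq hr
    exact (hcond k).2.2.2.2.2.2.2.2.2 q hqk r hrk

theorem directed_of_condLe_succ {p : ℕ → PPair α β}
    (hdesc : ∀ n, CondLe (p (n + 1)) (p n)) :
    Directed (fun a b => CondLe b a) p := by
  have hA : Monotone fun n => (p n).A := monotone_nat_of_le_succ fun n => (hdesc n).1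
  have hF : Monotone fun n => (p n).F := monotone_nat_of_le_succ fun n => (hdesc n).2
  intro i j
  exact ⟨max i j, ⟨hA (le_max_left i j), hF (le_max_left i j)⟩,
    ⟨hA (le_max_right i j), hF (le_max_right i j)⟩⟩

end PPair

theorem statement_13_general {α β : Type u} (T : STree α) (U : STree β)
    (p : ℕ → PPair α β) (hcond : ∀ n, IsCond T U (p n))
    (hdesc : ∀ n, CondLe (p (n + 1)) (p n)) :
    IsCond T U ⟨⋃ n, (p n).A, ⋃ n, (p n).F⟩ ∧
    (∀ m, CondLe (⟨⋃ n, (p n).A, ⋃ n, (p n).F⟩ : PPair α β) (p m)) ∧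
    (∀ q : PPair α β, IsCond T U q → (∀ m, CondLe q (p m)) →
      CondLe q ⟨⋃ n, (p n).A, ⋃ n, (p n).F⟩) :=
  ⟨PPair.isCond_iUnion (PPair.directed_of_condLe_succ hdesc) hcond, PPair.condLe_iUnion,
    fun _ _ hq => PPair.iUnion_condLe hq⟩

theorem statement_13 (hCH : CH) {α β : Type u} (T : STree α) (U : STree β)
    (hT : NiceTree T) (hU : NiceTree U)
    (p : ℕ → PPair α β) (hcond : ∀ n, IsCond T U (p n))
    (hdesc : ∀ n, CondLe (p (n + 1)) (p n)) :
    IsCond T U ⟨⋃ n, (p n).A, ⋃ n, (p n).F⟩ ∧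
    (∀ m, CondLe (⟨⋃ n, (p n).A, ⋃ n, (p n).F⟩ : PPair α β) (p m)) ∧
    (∀ q : PPair α β, IsCond T U q → (∀ m, CondLe q (p m)) →
      CondLe q ⟨⋃ n, (p n).A, ⋃ n, (p n).F⟩) :=
  statement_13_general T U p hcond hdesc
end

section
/- Let P be a forcing poset, N suitable for P, and p a strongly (N,P)-generic condition. If G is a V-generic filter on P with p ∈ G, then H := N ∩ G is a V-generic filter on the suborder N ∩ P. -/
/-!
Throughout, `≤` on `H` is the membership relation of `H(θ)`, and the order of `P` is coded by
`rc ∈ N` as a set of Kuratowski pairs, so it is first-order definable with parameters in `N`.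

Genericity of `N ∩ G`: if `E` is dense in `N ∩ P`, strong genericity of `p` makes the conditions
lying below some element of `E` or incompatible with `p` dense in `P`; `G` meets this set, and since
`p ∈ G` it does so below an element of `E`.

Directedness: for `x, y ∈ N ∩ G`, the conditions below both or incompatible with one of them are
dense in `P`, and those below a given `s` form a set definable from `x`, `y`, `s` and `rc`. By
elementarity that set has a member in `N`, so such conditions are dense in `N ∩ P`. Hence `N ∩ G`
contains one of them, and a member of `G` cannot be incompatible with `x` or `y`.
-/

open FirstOrder

universe u

open FirstOrder.Language Set

namespace Set

variable {M : Type*} {L : Language} [L.Structure M] {A : Set M} {α : Type*}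

theorem Definable₂.preimage_definableFun {S : Set (M × M)} (hS : A.Definable₂ L S)
    {f g : (α → M) → M} (hf : A.DefinableFun L f) (hg : A.DefinableFun L g) :
    A.Definable L {v | (f v, g v) ∈ S} := by
  have hF : A.DefinableMap L (fun v => ![f v, g v]) := by
    simp [DefinableMap, *]
  exact hS.preimage_map hF

theorem Definable.and {P Q : (α → M) → Prop} (hP : A.Definable L {v | P v})
    (hQ : A.Definable L {v | Q v}) : A.Definable L {v | P v ∧ Q v} :=
  hP.inter hQ

theorem Definable.or {P Q : (α → M) → Prop} (hP : A.Definable L {v | P v})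
    (hQ : A.Definable L {v | Q v}) : A.Definable L {v | P v ∨ Q v} :=
  hP.union hQ

theorem Definable.not {P : (α → M) → Prop} (hP : A.Definable L {v | P v}) :
    A.Definable L {v | ¬P v} :=
  hP.compl

theorem Definable.iff {P Q : (α → M) → Prop} (hP : A.Definable L {v | P v})
    (hQ : A.Definable L {v | Q v}) : A.Definable L {v | P v ↔ Q v} := by
  convert (hP.and hQ).or (hP.not.and hQ.not) using 1
  ext v
  exact iff_iff_and_or_not_and_not

theorem Definable.exists_elem {P : (α → M) → M → Prop}
    (h : A.Definable L {w : α ⊕ Unit → M | P (w ∘ Sum.inl) (w (Sum.inr ()))}) :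
    A.Definable L {v | ∃ y, P v y} := by
  convert h.exists_of_finite using 1
  ext v
  simp only [mem_ofPred_eq, Sum.elim_comp_inl, Sum.elim_inr]
  exact ⟨fun ⟨y, hy⟩ => ⟨fun _ => y, hy⟩, fun ⟨u, hu⟩ => ⟨u (), hu⟩⟩

theorem Definable.forall_elem {P : (α → M) → M → Prop}
    (h : A.Definable L {w : α ⊕ Unit → M | P (w ∘ Sum.inl) (w (Sum.inr ()))}) :
    A.Definable L {v | ∀ y, P v y} := by
  convert h.forall_of_finite using 1
  ext v
  simp only [mem_ofPred_eq, Sum.elim_comp_inl, Sum.elim_inr]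
  exact ⟨fun h u => h (u ()), fun h y => h fun _ => y⟩

end Set

section KuratowskiPair

variable {M : Type*} [LE M]

/-- `q = {{a}, {a, b}}`, reading `≤` as `∈`. -/
def IsKuratowskiPair (q a b : M) : Prop :=
  ∀ z, z ≤ q ↔ (∀ w, w ≤ z ↔ w = a) ∨ (∀ w, w ≤ z ↔ w = a ∨ w = b)

def PairMem (r a b : M) : Prop :=
  ∃ q ≤ r, IsKuratowskiPair q a b

theorem IsKuratowskiPair.eq (hext : ∀ x y : M, (∀ z, z ≤ x ↔ z ≤ y) → x = y) {q q' a b : M}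
    (h : IsKuratowskiPair q a b) (h' : IsKuratowskiPair q' a b) : q = q' :=
  hext q q' fun z => (h z).trans (h' z).symm

theorem pairMem_iff_pair_le (hext : ∀ x y : M, (∀ z, z ≤ x ↔ z ≤ y) → x = y)
    {pair : M → M → M} (hpair : ∀ a b, IsKuratowskiPair (pair a b) a b) {r a b : M} :
    PairMem r a b ↔ pair a b ≤ r :=
  ⟨fun ⟨_, hq, hqab⟩ => hqab.eq hext (hpair a b) ▸ hq, fun h => ⟨_, h, hpair a b⟩⟩

end KuratowskiPair

section Definability

variable {M : Type*} [LE M] [Language.order.Structure M] [Language.order.OrderedStructure M]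
  {A : Set M}

theorem definable₂_le : A.Definable₂ Language.order {p : M × M | p.1 ≤ p.2} :=
  (empty_definable_iff.2 ⟨(Term.var (Sum.inl 0)).le (Term.var (Sum.inl 1)), by
    ext; simp [Formula.Realize]⟩).mono (empty_subset A)

theorem definable_isKuratowskiPair {α : Type*} (i j k : α) :
    A.Definable Language.order {v : α → M | IsKuratowskiPair (v i) (v j) (v k)} := by
  unfold IsKuratowskiPair
  refine Definable.forall_elem (.iff ?_ (.or (.forall_elem (.iff ?_ ?_))
    (.forall_elem (.iff ?_ (.or ?_ ?_)))))
  all_goals first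
    | exact definable₂_le.preimage_definableFun (by fun_prop) (by fun_prop)
    | exact DefinableFun.ofPred_eq (by fun_prop) (by fun_prop)

theorem definable₂_pairMem {r : M} (hr : r ∈ A) :
    A.Definable₂ Language.order {p : M × M | PairMem r p.1 p.2} := by
  refine Definable.exists_elem (.and ?_ (definable_isKuratowskiPair _ _ _))
  exact definable₂_le.preimage_definableFun (by fun_prop) (definableFun_const _ _ hr)

end Definability

section Forcing

variable {H : Type*} {Pc : Set H} {ple : H → H → Prop}

def Compatible (Pc : Set H) (ple : H → H → Prop) (a b : H) : Prop :=
  ∃ r ∈ Pc, ple r a ∧ ple r b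

structure IsGenericFilter (Pc : Set H) (ple : H → H → Prop) (G : Set H) : Prop where
  subset : G ⊆ Pc
  up : ∀ x ∈ G, ∀ y ∈ Pc, ple x y → y ∈ G
  directed : ∀ x ∈ G, ∀ y ∈ G, ∃ z ∈ G, ple z x ∧ ple z y
  meets_dense : ∀ E : Set H, E ⊆ Pc → (∀ s ∈ Pc, ∃ t ∈ E, ple t s) → ∃ t ∈ E, t ∈ G

theorem IsGenericFilter.compatible {G : Set H} (hG : IsGenericFilter Pc ple G) {x y : H}
    (hx : x ∈ G) (hy : y ∈ G) : Compatible Pc ple x y :=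
  let ⟨z, hz, hzx, hzy⟩ := hG.directed x hx y hy
  ⟨z, hG.subset hz, hzx, hzy⟩

def IsStronglyGeneric (N Pc : Set H) (ple : H → H → Prop) (p : H) : Prop :=
  ∀ D : Set H, D ⊆ {x | x ∈ N ∧ x ∈ Pc} → (∀ s, s ∈ N → s ∈ Pc → ∃ t ∈ D, ple t s) →
    ∀ r ∈ Pc, ple r p → ∃ d ∈ D, Compatible Pc ple r d

theorem IsGenericFilter.exists_mem_of_isStronglyGeneric {N G : Set H} {p : H}
    (hrefl : ∀ x ∈ Pc, ple x x) (htrans : ∀ x y z, ple x y → ple y z → ple x z)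
    (hG : IsGenericFilter Pc ple G) (hp : IsStronglyGeneric N Pc ple p) (hpG : p ∈ G)
    {E : Set H} (hE : E ⊆ {x | x ∈ N ∧ x ∈ Pc})
    (hdense : ∀ s, s ∈ N → s ∈ Pc → ∃ t ∈ E, ple t s) :
    ∃ t ∈ E, t ∈ G := by
  let E' := {w | w ∈ Pc ∧ ((∃ d ∈ E, ple w d) ∨ ¬Compatible Pc ple w p)}
  have hE'dense : ∀ s ∈ Pc, ∃ t ∈ E', ple t s := by
    intro s hs
    by_cases hsp : Compatible Pc ple s p
    · obtain ⟨r, hr, hrs, hrp⟩ := hsp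
      obtain ⟨d, hd, w, hw, hwr, hwd⟩ := hp E hE hdense r hr hrp
      exact ⟨w, ⟨hw, .inl ⟨d, hd, hwd⟩⟩, htrans w r s hwr hrs⟩
    · exact ⟨s, ⟨hs, .inr hsp⟩, hrefl s hs⟩
  obtain ⟨t, ⟨-, ⟨d, hd, htd⟩ | hincomp⟩, htG⟩ := hG.meets_dense E' (fun w hw => hw.1) hE'dense
  · exact ⟨d, hd, hG.up t htG d (hE hd).2 htd⟩
  · exact absurd (hG.compatible htG hpG) hincomp

theorem exists_le_and_le_or_not_compatible (hrefl : ∀ x ∈ Pc, ple x x)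
    (htrans : ∀ x y z, ple x y → ple y z → ple x z) {s : H} (hs : s ∈ Pc) (x y : H) :
    ∃ t ∈ Pc, ple t s ∧
      (ple t x ∧ ple t y ∨ ¬Compatible Pc ple t x ∨ ¬Compatible Pc ple t y) := by
  by_cases hsx : Compatible Pc ple s x
  · obtain ⟨r, hr, hrs, hrx⟩ := hsx
    by_cases hry : Compatible Pc ple r y
    · obtain ⟨u, hu, hur, huy⟩ := hry
      exact ⟨u, hu, htrans u r s hur hrs, .inl ⟨htrans u r x hur hrx, huy⟩⟩
    · exact ⟨r, hr, hrs, .inr (.inr hry)⟩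
  · exact ⟨s, hs, hrefl s hs, .inr (.inl hsx)⟩

end Forcing

section Elementary

variable {H : Type*} {L : Language} [L.Structure H] {Pc : Set H} {ple : H → H → Prop}

theorem FirstOrder.Language.ElementarySubstructure.exists_mem_le_and_le_or_not_compatible
    (N : L.ElementarySubstructure H)
    (hR : (N : Set H).Definable₂ L {q | q.1 ∈ Pc ∧ q.2 ∈ Pc ∧ ple q.1 q.2})
    (hrefl : ∀ x ∈ Pc, ple x x) (htrans : ∀ x y z, ple x y → ple y z → ple x z)
    {s x y : H} (hsN : s ∈ N) (hxN : x ∈ N) (hyN : y ∈ N) (hs : s ∈ Pc) (hx : x ∈ Pc)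
    (hy : y ∈ Pc) :
    ∃ t ∈ N, t ∈ Pc ∧ ple t s ∧
      (ple t x ∧ ple t y ∨ ¬Compatible Pc ple t x ∨ ¬Compatible Pc ple t y) := by
  set R := {q : H × H | q.1 ∈ Pc ∧ q.2 ∈ Pc ∧ ple q.1 q.2}
  set T := {t | t ∈ Pc ∧ ple t s ∧
      (ple t x ∧ ple t y ∨ ¬Compatible Pc ple t x ∨ ¬Compatible Pc ple t y)}
  have hT : T = {t | (t, s) ∈ R ∧ ((t, x) ∈ R ∧ (t, y) ∈ R ∨
      ¬(∃ r, (r, t) ∈ R ∧ (r, x) ∈ R) ∨ ¬(∃ r, (r, t) ∈ R ∧ (r, y) ∈ R))} := by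
    ext t
    simp only [Compatible, R, T, mem_ofPred_eq, hs, hx, hy, true_and]
    grind
  have hTdef : (N : Set H).Definable₁ L T := by
    rw [hT]
    refine .and ?_ (.or (.and ?_ ?_) (.or (.not (.exists_elem (.and ?_ ?_)))
      (.not (.exists_elem (.and ?_ ?_)))))
    all_goals exact hR.preimage_definableFun (by fun_prop) (by fun_prop (disch := assumption))
  obtain ⟨t, htT, htN⟩ := N.meetsDefinable T
    (exists_le_and_le_or_not_compatible hrefl htrans hs x y) hTdef
  exact ⟨t, htN, htT⟩

theorem IsGenericFilter.exists_mem_le_le_of_isStronglyGeneric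
    (N : L.ElementarySubstructure H)
    (hR : (N : Set H).Definable₂ L {q | q.1 ∈ Pc ∧ q.2 ∈ Pc ∧ ple q.1 q.2})
    (hrefl : ∀ x ∈ Pc, ple x x) (htrans : ∀ x y z, ple x y → ple y z → ple x z)
    {G : Set H} {p : H} (hG : IsGenericFilter Pc ple G) (hp : IsStronglyGeneric N Pc ple p)
    (hpG : p ∈ G) {x y : H} (hxN : x ∈ N) (hxG : x ∈ G) (hyN : y ∈ N) (hyG : y ∈ G) :
    ∃ z, z ∈ N ∧ z ∈ G ∧ ple z x ∧ ple z y := by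
  let D := {t | t ∈ N ∧ t ∈ Pc ∧
    (ple t x ∧ ple t y ∨ ¬Compatible Pc ple t x ∨ ¬Compatible Pc ple t y)}
  have hDdense : ∀ s, s ∈ N → s ∈ Pc → ∃ t ∈ D, ple t s := fun s hsN hs =>
    let ⟨t, htN, ht, hts, hdec⟩ := N.exists_mem_le_and_le_or_not_compatible hR hrefl htrans
      hsN hxN hyN hs (hG.subset hxG) (hG.subset hyG)
    ⟨t, ⟨htN, ht, hdec⟩, hts⟩
  obtain ⟨t, ⟨htN, -, hdec⟩, htG⟩ :=
    hG.exists_mem_of_isStronglyGeneric hrefl htrans hp hpG (fun _ ht => ⟨ht.1, ht.2.1⟩) hDdense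
  rcases hdec with ⟨htx, hty⟩ | hincomp | hincomp
  · exact ⟨t, htN, htG, htx, hty⟩
  · exact absurd (hG.compatible htG hxG) hincomp
  · exact absurd (hG.compatible htG hyG) hincomp

end Elementary

theorem statement_18_general {H : Type u} [LE H] [Language.order.Structure H]
    [Language.order.OrderedStructure H]
    (hext : ∀ x y : H, (∀ z : H, z ≤ x ↔ z ≤ y) → x = y)
    (N : Language.order.ElementarySubstructure H)
    (Pc : Set H) (ple : H → H → Prop)
    (hrefl : ∀ x ∈ Pc, ple x x)
    (htrans : ∀ x y z : H, ple x y → ple y z → ple x z)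
    (pair : H → H → H)
    (hpair : ∀ a b z : H, z ≤ pair a b ↔
      ((∀ w : H, w ≤ z ↔ w = a) ∨ (∀ w : H, w ≤ z ↔ (w = a ∨ w = b))))
    (rc : H) (hrcN : rc ∈ N)
    (hrcext : ∀ x y : H, pair x y ≤ rc ↔ (x ∈ Pc ∧ y ∈ Pc ∧ ple x y))
    (p : H)
    -- `p` is strongly `(N,P)`-generic:
    (hgen : ∀ D : Set H, D ⊆ {x | x ∈ N ∧ x ∈ Pc} →
      (∀ s : H, s ∈ N → s ∈ Pc → ∃ t ∈ D, ple t s) →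
      ∀ r ∈ Pc, ple r p → ∃ d ∈ D, ∃ w ∈ Pc, ple w r ∧ ple w d)
    -- `G` is a `V`-generic filter on `P` with `p ∈ G`:
    (G : Set H) (hGP : G ⊆ Pc)
    (hGup : ∀ x ∈ G, ∀ y ∈ Pc, ple x y → y ∈ G)
    (hGdir : ∀ x ∈ G, ∀ y ∈ G, ∃ z ∈ G, ple z x ∧ ple z y)
    (hGgen : ∀ E : Set H, E ⊆ Pc → (∀ s ∈ Pc, ∃ t ∈ E, ple t s) →
      ∃ t ∈ E, t ∈ G)
    (hpG : p ∈ G) :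
    -- `H' := N ∩ G` is a `V`-generic filter on `N ∩ P`:
    (∀ x : H, x ∈ N → x ∈ G → ∀ y : H, y ∈ N → y ∈ Pc → ple x y → y ∈ G) ∧
    (∀ x : H, x ∈ N → x ∈ G → ∀ y : H, y ∈ N → y ∈ G →
      ∃ z : H, z ∈ N ∧ z ∈ G ∧ ple z x ∧ ple z y) ∧
    (∀ E : Set H, E ⊆ {x | x ∈ N ∧ x ∈ Pc} →
      (∀ s : H, s ∈ N → s ∈ Pc → ∃ t ∈ E, ple t s) →
      ∃ t ∈ E, t ∈ G) := by
  have hG : IsGenericFilter Pc ple G := ⟨hGP, hGup, hGdir, hGgen⟩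
  have hR : (N : Set H).Definable₂ Language.order {q | q.1 ∈ Pc ∧ q.2 ∈ Pc ∧ ple q.1 q.2} := by
    convert definable₂_pairMem hrcN using 3 with q
    rw [pairMem_iff_pair_le hext hpair, hrcext]
  exact ⟨fun x _ hxG y _ => hGup x hxG y,
    fun x hxN hxG y hyN hyG =>
      hG.exists_mem_le_le_of_isStronglyGeneric N hR hrefl htrans hgen hpG hxN hxG hyN hyG,
    fun E hE hdense => hG.exists_mem_of_isStronglyGeneric hrefl htrans hgen hpG hE hdense⟩

/-- `H` stands for `H(θ)` with `≤` interpreted as the membership relation `∈`;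
`N` is an elementary substructure of `H` (so `N` is suitable for the poset `P`,
which is an element of `N` coded by `pc` and `rc`).  If `p ∈ G` is strongly
`(N,P)`-generic and `G` is a `V`-generic filter on `P`, then `N ∩ G` is a
`V`-generic filter on `N ∩ P`. -/
theorem statement_18 {H : Type u} [LE H] [Language.order.Structure H]
    [Language.order.OrderedStructure H]
    (hext : ∀ x y : H, (∀ z : H, z ≤ x ↔ z ≤ y) → x = y)
    (N : Language.order.ElementarySubstructure H)
    (Pc : Set H) (ple : H → H → Prop)
    (hrefl : ∀ x ∈ Pc, ple x x)
    (htrans : ∀ x y z : H, ple x y → ple y z → ple x z)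
    (top : H) (htop : top ∈ Pc) (htopmax : ∀ x ∈ Pc, ple x top)
    (pair : H → H → H)
    (hpair : ∀ a b z : H, z ≤ pair a b ↔
      ((∀ w : H, w ≤ z ↔ w = a) ∨ (∀ w : H, w ≤ z ↔ (w = a ∨ w = b))))
    (pc : H) (hpcN : pc ∈ N) (hpcext : ∀ x : H, x ≤ pc ↔ x ∈ Pc)
    (rc : H) (hrcN : rc ∈ N)
    (hrcext : ∀ x y : H, pair x y ≤ rc ↔ (x ∈ Pc ∧ y ∈ Pc ∧ ple x y))
    (p : H) (hp : p ∈ Pc)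
    -- `p` is strongly `(N,P)`-generic:
    (hgen : ∀ D : Set H, D ⊆ {x | x ∈ N ∧ x ∈ Pc} →
      (∀ s : H, s ∈ N → s ∈ Pc → ∃ t ∈ D, ple t s) →
      ∀ r ∈ Pc, ple r p → ∃ d ∈ D, ∃ w ∈ Pc, ple w r ∧ ple w d)
    -- `G` is a `V`-generic filter on `P` with `p ∈ G`:
    (G : Set H) (hGP : G ⊆ Pc)
    (hGup : ∀ x ∈ G, ∀ y ∈ Pc, ple x y → y ∈ G)
    (hGdir : ∀ x ∈ G, ∀ y ∈ G, ∃ z ∈ G, ple z x ∧ ple z y)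
    (hGgen : ∀ E : Set H, E ⊆ Pc → (∀ s ∈ Pc, ∃ t ∈ E, ple t s) →
      ∃ t ∈ E, t ∈ G)
    (hpG : p ∈ G) :
    -- `H' := N ∩ G` is a `V`-generic filter on `N ∩ P`:
    (∀ x : H, x ∈ N → x ∈ G → ∀ y : H, y ∈ N → y ∈ Pc → ple x y → y ∈ G) ∧
    (∀ x : H, x ∈ N → x ∈ G → ∀ y : H, y ∈ N → y ∈ G →
      ∃ z : H, z ∈ N ∧ z ∈ G ∧ ple z x ∧ ple z y) ∧
    (∀ E : Set H, E ⊆ {x | x ∈ N ∧ x ∈ Pc} →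
      (∀ s : H, s ∈ N → s ∈ Pc → ∃ t ∈ E, ple t s) →
      ∃ t ∈ E, t ∈ G) :=
  statement_18_general hext N Pc ple hrefl htrans pair hpair rc hrcN hrcext p hgen G hGP hGup hGdir
    hGgen hpG
end
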